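/- arXiv:2110.09280 — 4 statements merged into one kernel-verified Lean document; each statement's English description precedes it below -/
import Mathlib

section
/- Let (X, r) be a non-degenerate involutive set-theoretic solution of the Yang–Baxter equation with diagonal D. Then D is bijective, its inverse is the map i ↦ σ_i^{−1}(i), and τ_i^{−1} ∘ D = D ∘ σ_i for all i ∈ X. -/
/-! Set-theoretic solutions of the Yang–Baxter equation.
For `r : X × X → X × X` we write `r (i, j) = (σ i j, τ j i)`, i.e. `σ_i(j) = σ i j` and
`τ_j(i) = τ j i`. -/

variable {X : Type*}

/-- The map `r : X × X → X × X` determined by families `σ`, `τ` via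
`r (i, j) = (σ_i(j), τ_j(i))`. -/
def rmapF (σ τ : X → X → X) : X × X → X × X := fun p => (σ p.1 p.2, τ p.2 p.1)

/-- `r × id` on `X × X × X`. -/
def ridF (r : X × X → X × X) : X × X × X → X × X × X :=
  fun p => ((r (p.1, p.2.1)).1, (r (p.1, p.2.1)).2, p.2.2)

/-- `id × r` on `X × X × X`. -/
def idrF (r : X × X → X × X) : X × X × X → X × X × X := fun p => (p.1, r p.2)

/-- The braid (Yang–Baxter) equation `(r × id) ∘ (id × r) ∘ (r × id) = (id × r) ∘ (r × id) ∘ (id × r)`. -/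
def BraidEq (r : X × X → X × X) : Prop :=
  ridF r ∘ idrF r ∘ ridF r = idrF r ∘ ridF r ∘ idrF r

/-- A non-degenerate involutive set-theoretic solution of the Yang–Baxter equation on `X`:
the maps `σ_i` and `τ_i` are bijective (packaged as equivalences), the induced map
`r (i, j) = (σ_i(j), τ_j(i))` satisfies the braid equation, and `r ∘ r = id`
(which in particular makes `r` bijective). -/
structure NDIS (X : Type*) where
  σ : X → X ≃ X
  τ : X → X ≃ X
  braid : BraidEq (rmapF (fun i => ⇑(σ i)) (fun i => ⇑(τ i)))
  invol : ∀ p : X × X,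
    rmapF (fun i => ⇑(σ i)) (fun i => ⇑(τ i))
      (rmapF (fun i => ⇑(σ i)) (fun i => ⇑(τ i)) p) = p

namespace NDIS

/-- The map `r` of the solution. -/
def r (S : NDIS X) : X × X → X × X := rmapF (fun i => ⇑(S.σ i)) (fun i => ⇑(S.τ i))

/-- The diagonal `D : X → X`, `D(i) = τ_i⁻¹(i)`. -/
def D (S : NDIS X) : X → X := fun i => (S.τ i).symm i

end NDIS


section Aux
variable {X : Type*} (S : NDIS X)

lemma NDIS.inv1 (p q : X) : S.σ (S.σ p q) (S.τ q p) = p := by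
  have h := S.invol (p, q)
  simp only [rmapF, Prod.ext_iff] at h
  exact h.1

lemma NDIS.inv2 (p q : X) : S.τ (S.τ q p) (S.σ p q) = q := by
  have h := S.invol (p, q)
  simp only [rmapF, Prod.ext_iff] at h
  exact h.2

lemma NDIS.braid3 (i j k : X) :
    S.τ k (S.τ j i) = S.τ (S.τ k j) (S.τ (S.σ j k) i) := by
  have h := congrFun S.braid (i, j, k)
  simp only [Function.comp_apply, ridF, idrF, rmapF, Prod.ext_iff] at h
  exact h.2.2

lemma NDIS.sigma_D (i : X) : S.σ (S.D i) i = S.D i := by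
  have h := S.inv2 (S.D i) i
  have hti : S.τ i (S.D i) = i := (S.τ i).apply_symm_apply i
  rw [hti] at h
  have : S.σ (S.D i) i = (S.τ i).symm i := (S.τ i).eq_symm_apply.mpr h
  simpa [NDIS.D] using this

lemma NDIS.U_D (i : X) : (S.σ (S.D i)).symm (S.D i) = i := by
  rw [Equiv.symm_apply_eq]
  exact (S.sigma_D i).symm

lemma NDIS.tau_U (i : X) : S.τ ((S.σ i).symm i) i = (S.σ i).symm i := by
  set u := (S.σ i).symm i with hu
  have hsu : S.σ i u = i := (S.σ i).apply_symm_apply i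
  have h1 := S.inv1 i u
  rw [hsu] at h1
  -- h1 : S.σ i (S.τ u i) = i
  have hc : S.τ u i = u := by
    have := (S.σ i).injective (h1.trans hsu.symm)
    exact this
  exact hc

lemma NDIS.D_U (i : X) : S.D ((S.σ i).symm i) = i := by
  have h := S.tau_U i
  simp only [NDIS.D]
  exact (Equiv.symm_apply_eq _).mpr h.symm

lemma NDIS.comm (a b : X) : (S.τ a).symm (S.D b) = S.D (S.σ a b) := by
  have key : S.τ b (S.τ a (S.D (S.σ a b))) = b := by
    have h3 := S.braid3 (S.D (S.σ a b)) a b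
    have hD : S.τ (S.σ a b) (S.D (S.σ a b)) = S.σ a b :=
      (S.τ (S.σ a b)).apply_symm_apply _
    rw [h3, hD, S.inv2 a b]
  have h1 : S.τ a (S.D (S.σ a b)) = (S.τ b).symm b := (S.τ b).eq_symm_apply.mpr key
  have : S.D (S.σ a b) = (S.τ a).symm ((S.τ b).symm b) := (S.τ a).eq_symm_apply.mpr h1
  rw [this]; rfl

end Aux

/-- For a non-degenerate involutive solution `(X, r)` with diagonal `D`,
`D` is bijective with (two-sided) inverse `i ↦ σ_i⁻¹(i)`, and `τ_i⁻¹ ∘ D = D ∘ σ_i`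
for all `i ∈ X`. -/
theorem diagonal_bijective_inverse {X : Type*} (S : NDIS X) :
    Function.Bijective S.D ∧
      ((fun i => (S.σ i).symm i) ∘ S.D = id) ∧
      (S.D ∘ (fun i => (S.σ i).symm i) = id) ∧
      ∀ i : X, ⇑(S.τ i).symm ∘ S.D = S.D ∘ ⇑(S.σ i) := by
  have hUD : (fun i => (S.σ i).symm i) ∘ S.D = id := funext fun i => S.U_D i
  have hDU : S.D ∘ (fun i => (S.σ i).symm i) = id := funext fun i => S.D_U i
  refine ⟨Function.bijective_iff_has_inverse.mpr
    ⟨fun i => (S.σ i).symm i, congrFun hUD, congrFun hDU⟩, hUD, hDU, fun i => ?_⟩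
  funext j
  exact S.comm i j
end

section
/- Let 𝕜 be a field, let (X, r) be a set-theoretic solution of the Yang–Baxter equation with X finite, let R : X × X → 𝕜 take only nonzero values (written R_{i,j}), let W be the 𝕜-vector space with basis (w_i)_{i ∈ X}, and let c : W ⊗ W → W ⊗ W be the linear map determined by c(w_i ⊗ w_j) = R_{i,j} w_{σ_i(j)} ⊗ w_{τ_j(i)}. Then c satisfies the braid equation (c ⊗ id) ∘ (id ⊗ c) ∘ (c ⊗ id) = (id ⊗ c) ∘ (c ⊗ id) ∘ (id ⊗ c) on W ⊗ W ⊗ W if and only if R_{i,j} R_{τ_j(i),k} R_{σ_i(j),σ_{τ_j(i)}(k)} = R_{j,k} R_{i,σ_j(k)} R_{τ_{σ_j(k)}(i),τ_k(j)} for all i, j, k ∈ X. -/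
/-! Set-theoretic solutions of the Yang–Baxter equation.
For `r : X × X → X × X` we write `r (i, j) = (σ i j, τ j i)`, i.e. `σ_i(j) = σ i j` and
`τ_j(i) = τ j i`. -/

variable {X : Type*}

/-! Over a basis indexed by `X`, the braiding `c(wᵢ ⊗ wⱼ) = R_{i,j} w_{σᵢ(j)} ⊗ w_{τⱼ(i)}` is
monomial: both sides of the braid equation send the basis tensor indexed by `(i, j, k)` to a
scalar multiple of another basis tensor, whose index is computed by `r × id` and `id × r`. The
braid equation for `r` makes the two target indices agree, so the two sides coincide exactly
when their coefficients do. -/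

open TensorProduct

theorem Module.Basis.linearMap_eq_iff_of_apply_eq_smul {ι ι' A N N' : Type*} [Semiring A]
    [AddCommMonoid N] [Module A N] [AddCommMonoid N'] [Module A N']
    (B : Module.Basis ι A N) (B' : Module.Basis ι' A N') (π : ι → ι') {a a' : ι → A}
    {f g : N →ₗ[A] N'} (hf : ∀ x, f (B x) = a x • B' (π x))
    (hg : ∀ x, g (B x) = a' x • B' (π x)) :
    f = g ↔ ∀ x, a x = a' x := by
  refine ⟨fun h x => ?_, fun h => B.ext fun x => by rw [hf, hg, h]⟩
  have hcoeff := congrArg (fun v => B'.repr v (π x)) (LinearMap.congr_fun h (B x))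
  simpa [hf, hg] using hcoeff

section MonomialBraiding

variable {X A M : Type*} [CommSemiring A] [AddCommMonoid M] [Module A M]

noncomputable def Module.Basis.tripleTensor (b : Module.Basis X A M) :
    Module.Basis (X × X × X) A ((M ⊗[A] M) ⊗[A] M) :=
  ((b.tensorProduct b).tensorProduct b).reindex (Equiv.prodAssoc X X X)

@[simp]
theorem Module.Basis.tripleTensor_apply (b : Module.Basis X A M) (p : X × X × X) :
    b.tripleTensor p = (b p.1 ⊗ₜ b p.2.1) ⊗ₜ b p.2.2 := by
  simp [Module.Basis.tripleTensor]

noncomputable def lTensorAssoc (f : M ⊗[A] M →ₗ[A] M ⊗[A] M) :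
    (M ⊗[A] M) ⊗[A] M →ₗ[A] (M ⊗[A] M) ⊗[A] M :=
  (TensorProduct.assoc A M M M).symm.toLinearMap ∘ₗ f.lTensor M ∘ₗ
    (TensorProduct.assoc A M M M).toLinearMap

variable (b : Module.Basis X A M) {σ τ : X → X → X} {R : X × X → A}
  {c : M ⊗[A] M →ₗ[A] M ⊗[A] M}
  (hc : ∀ i j, c (b i ⊗ₜ b j) = R (i, j) • (b (σ i j) ⊗ₜ b (τ j i)))
include hc

theorem rTensor_tripleTensor (p : X × X × X) :
    c.rTensor M (b.tripleTensor p) =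
      R (p.1, p.2.1) • b.tripleTensor (ridF (rmapF σ τ) p) := by
  simp [ridF, rmapF, hc, smul_tmul']

theorem lTensorAssoc_tripleTensor (p : X × X × X) :
    lTensorAssoc c (b.tripleTensor p) =
      R (p.2.1, p.2.2) • b.tripleTensor (idrF (rmapF σ τ) p) := by
  simp [lTensorAssoc, idrF, rmapF, hc, smul_tmul']

theorem braid_lhs_tripleTensor (i j k : X) :
    (c.rTensor M ∘ₗ lTensorAssoc c ∘ₗ c.rTensor M) (b.tripleTensor (i, j, k)) =
      (R (i, j) * R (τ j i, k) * R (σ i j, σ (τ j i) k)) •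
        b.tripleTensor ((ridF (rmapF σ τ) ∘ idrF (rmapF σ τ) ∘ ridF (rmapF σ τ)) (i, j, k)) := by
  simp only [LinearMap.comp_apply, rTensor_tripleTensor b hc, lTensorAssoc_tripleTensor b hc,
    map_smul, smul_smul, mul_assoc]
  rfl

theorem braid_rhs_tripleTensor (i j k : X) :
    (lTensorAssoc c ∘ₗ c.rTensor M ∘ₗ lTensorAssoc c) (b.tripleTensor (i, j, k)) =
      (R (j, k) * R (i, σ j k) * R (τ (σ j k) i, τ k j)) •
        b.tripleTensor ((idrF (rmapF σ τ) ∘ ridF (rmapF σ τ) ∘ idrF (rmapF σ τ)) (i, j, k)) := by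
  simp only [LinearMap.comp_apply, rTensor_tripleTensor b hc, lTensorAssoc_tripleTensor b hc,
    map_smul, smul_smul, mul_assoc]
  rfl

end MonomialBraiding

open TensorProduct in
theorem braiding_iff_coefficient_relation_general {X : Type*}
    (𝕜 : Type*) [Field 𝕜] (σ τ : X → X → X)
    (hbraid : BraidEq (rmapF σ τ))
    (R : X × X → 𝕜)
    (c : ((X →₀ 𝕜) ⊗[𝕜] (X →₀ 𝕜)) →ₗ[𝕜] ((X →₀ 𝕜) ⊗[𝕜] (X →₀ 𝕜)))
    (hc : ∀ i j : X,
      c (Finsupp.single i (1 : 𝕜) ⊗ₜ[𝕜] Finsupp.single j (1 : 𝕜)) =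
        R (i, j) •
          (Finsupp.single (σ i j) (1 : 𝕜) ⊗ₜ[𝕜] Finsupp.single (τ j i) (1 : 𝕜))) :
    (LinearMap.rTensor (X →₀ 𝕜) c ∘ₗ
        ((TensorProduct.assoc 𝕜 (X →₀ 𝕜) (X →₀ 𝕜) (X →₀ 𝕜)).symm.toLinearMap ∘ₗ
          LinearMap.lTensor (X →₀ 𝕜) c ∘ₗ
          (TensorProduct.assoc 𝕜 (X →₀ 𝕜) (X →₀ 𝕜) (X →₀ 𝕜)).toLinearMap) ∘ₗ
        LinearMap.rTensor (X →₀ 𝕜) c =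
      ((TensorProduct.assoc 𝕜 (X →₀ 𝕜) (X →₀ 𝕜) (X →₀ 𝕜)).symm.toLinearMap ∘ₗ
          LinearMap.lTensor (X →₀ 𝕜) c ∘ₗ
          (TensorProduct.assoc 𝕜 (X →₀ 𝕜) (X →₀ 𝕜) (X →₀ 𝕜)).toLinearMap) ∘ₗ
        LinearMap.rTensor (X →₀ 𝕜) c ∘ₗ
        ((TensorProduct.assoc 𝕜 (X →₀ 𝕜) (X →₀ 𝕜) (X →₀ 𝕜)).symm.toLinearMap ∘ₗ
          LinearMap.lTensor (X →₀ 𝕜) c ∘ₗ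
          (TensorProduct.assoc 𝕜 (X →₀ 𝕜) (X →₀ 𝕜) (X →₀ 𝕜)).toLinearMap)) ↔
      ∀ i j k : X,
        R (i, j) * R (τ j i, k) * R (σ i j, σ (τ j i) k) =
          R (j, k) * R (i, σ j k) * R (τ (σ j k) i, τ k j) := by
  set b : Module.Basis X 𝕜 (X →₀ 𝕜) := Finsupp.basisSingleOne
  have hcb : ∀ i j, c (b i ⊗ₜ b j) = R (i, j) • (b (σ i j) ⊗ₜ b (τ j i)) := by
    simpa [b] using hc
  have hlhs := fun p : X × X × X => braid_lhs_tripleTensor b hcb p.1 p.2.1 p.2.2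
  have hrhs := fun p : X × X × X => hbraid ▸ braid_rhs_tripleTensor b hcb p.1 p.2.1 p.2.2
  refine (b.tripleTensor.linearMap_eq_iff_of_apply_eq_smul b.tripleTensor _ hlhs hrhs).trans ?_
  simp only [Prod.forall]

open TensorProduct in
/-- Let `(X, r)` be a set-theoretic solution of the YBE with `X` finite,
`R : X × X → 𝕜` nowhere zero, `W = X →₀ 𝕜` the `𝕜`-vector space with basis `(w_i)`,
and `c : W ⊗ W → W ⊗ W` the linear map determined by
`c(w_i ⊗ w_j) = R_{i,j} w_{σ_i(j)} ⊗ w_{τ_j(i)}`. Then `c` satisfies the braid equation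
`(c ⊗ id)(id ⊗ c)(c ⊗ id) = (id ⊗ c)(c ⊗ id)(id ⊗ c)` on `W ⊗ W ⊗ W` iff
`R_{i,j} R_{τ_j(i),k} R_{σ_i(j),σ_{τ_j(i)}(k)} = R_{j,k} R_{i,σ_j(k)} R_{τ_{σ_j(k)}(i),τ_k(j)}`
for all `i, j, k ∈ X`. (The middle map `id ⊗ c` is transported along the associator.) -/
theorem braiding_iff_coefficient_relation {X : Type*} [Fintype X] [Nonempty X]
    (𝕜 : Type*) [Field 𝕜] (σ τ : X → X → X)
    (hbraid : BraidEq (rmapF σ τ)) (hbij : Function.Bijective (rmapF σ τ))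
    (R : X × X → 𝕜) (hR : ∀ p, R p ≠ 0)
    (c : ((X →₀ 𝕜) ⊗[𝕜] (X →₀ 𝕜)) →ₗ[𝕜] ((X →₀ 𝕜) ⊗[𝕜] (X →₀ 𝕜)))
    (hc : ∀ i j : X,
      c (Finsupp.single i (1 : 𝕜) ⊗ₜ[𝕜] Finsupp.single j (1 : 𝕜)) =
        R (i, j) •
          (Finsupp.single (σ i j) (1 : 𝕜) ⊗ₜ[𝕜] Finsupp.single (τ j i) (1 : 𝕜))) :
    (LinearMap.rTensor (X →₀ 𝕜) c ∘ₗ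
        ((TensorProduct.assoc 𝕜 (X →₀ 𝕜) (X →₀ 𝕜) (X →₀ 𝕜)).symm.toLinearMap ∘ₗ
          LinearMap.lTensor (X →₀ 𝕜) c ∘ₗ
          (TensorProduct.assoc 𝕜 (X →₀ 𝕜) (X →₀ 𝕜) (X →₀ 𝕜)).toLinearMap) ∘ₗ
        LinearMap.rTensor (X →₀ 𝕜) c =
      ((TensorProduct.assoc 𝕜 (X →₀ 𝕜) (X →₀ 𝕜) (X →₀ 𝕜)).symm.toLinearMap ∘ₗ
          LinearMap.lTensor (X →₀ 𝕜) c ∘ₗ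
          (TensorProduct.assoc 𝕜 (X →₀ 𝕜) (X →₀ 𝕜) (X →₀ 𝕜)).toLinearMap) ∘ₗ
        LinearMap.rTensor (X →₀ 𝕜) c ∘ₗ
        ((TensorProduct.assoc 𝕜 (X →₀ 𝕜) (X →₀ 𝕜) (X →₀ 𝕜)).symm.toLinearMap ∘ₗ
          LinearMap.lTensor (X →₀ 𝕜) c ∘ₗ
          (TensorProduct.assoc 𝕜 (X →₀ 𝕜) (X →₀ 𝕜) (X →₀ 𝕜)).toLinearMap)) ↔
      ∀ i j k : X,
        R (i, j) * R (τ j i, k) * R (σ i j, σ (τ j i) k) =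
          R (j, k) * R (i, σ j k) * R (τ (σ j k) i, τ k j) :=
  braiding_iff_coefficient_relation_general 𝕜 σ τ hbraid R c hc
end

section
/- Let (X, r) be a non-degenerate involutive set-theoretic solution of the Yang–Baxter equation with diagonal D, let 𝕜 be a field, and let R : X × X → 𝕜 take only nonzero values (written R_{i,j}) and satisfy R_{i,j} R_{τ_j(i),k} R_{σ_i(j),σ_{τ_j(i)}(k)} = R_{j,k} R_{i,σ_j(k)} R_{τ_{σ_j(k)}(i),τ_k(j)} for all i, j, k ∈ X. Then R_{D(j), j} = R_{D(τ_k(j)), τ_k(j)} for all j, k ∈ X. -/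
/-! Set-theoretic solutions of the Yang–Baxter equation.
For `r : X × X → X × X` we write `r (i, j) = (σ i j, τ j i)`, i.e. `σ_i(j) = σ i j` and
`τ_j(i) = τ j i`. -/

variable {X : Type*}

/-- Let `(X, r)` be a non-degenerate involutive solution with diagonal `D`,
and let `R : X × X → 𝕜` be nowhere zero and satisfy
`R_{i,j} R_{τ_j(i),k} R_{σ_i(j),σ_{τ_j(i)}(k)} = R_{j,k} R_{i,σ_j(k)} R_{τ_{σ_j(k)}(i),τ_k(j)}`
for all `i, j, k ∈ X`. Then `R_{D(j),j} = R_{D(τ_k(j)),τ_k(j)}` for all `j, k ∈ X`. -/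
theorem R_diagonal_constant_on_tau_orbits {X : Type*} (S : NDIS X)
    (𝕜 : Type*) [Field 𝕜] (R : X × X → 𝕜) (hR : ∀ p, R p ≠ 0)
    (hrel : ∀ i j k : X,
      R (i, j) * R (S.τ j i, k) * R (S.σ i j, S.σ (S.τ j i) k) =
        R (j, k) * R (i, S.σ j k) * R (S.τ (S.σ j k) i, S.τ k j)) :
    ∀ j k : X, R (S.D j, j) = R (S.D (S.τ k j), S.τ k j) := by
  intro j k
  have hDj : S.τ j (S.D j) = j := (S.τ j).apply_symm_apply j
  have hτσ : ∀ i j : X, S.τ (S.τ j i) (S.σ i j) = j := by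
    intro i j
    have h := congrArg Prod.snd (S.invol (i, j))
    simpa [NDIS.r, rmapF] using h
  have hσD : S.σ (S.D j) j = S.D j := by
    have h := hτσ (S.D j) j
    rw [hDj] at h
    exact (S.τ j).injective (by rw [h, hDj])
  have hbraid : ∀ i j k : X, S.τ k (S.τ j i) = S.τ (S.τ k j) (S.τ (S.σ j k) i) := by
    intro i j k
    have h := congrArg (fun p : X × X × X => p.2.2) (congrFun S.braid (i, j, k))
    simpa [ridF, idrF, rmapF, Function.comp] using h
  have hD2 : S.τ (S.σ j k) (S.D j) = S.D (S.τ k j) := by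
    have h := hbraid (S.D j) j k
    rw [hDj] at h
    exact (S.τ (S.τ k j)).injective
      (by rw [← h]; simp [NDIS.D])
  have h := hrel (S.D j) j k
  rw [hDj, hσD, hD2] at h
  exact mul_right_cancel₀ (mul_ne_zero (hR (j, k)) (hR (S.D j, S.σ j k)))
    (by linear_combination h)
end

section
/- Let (X, r) be a non-degenerate involutive set-theoretic solution of the Yang–Baxter equation. For all x, y ∈ X and all integers t, k ≥ 1, the word Ψ_k(x)Ψ_t(y) in X^{k+t} lies in the same orbit as the word Ψ_{−t}(σ_{Ψ_k(x)}(D^{t−1}(y))) Ψ_k(τ_{Ψ_t(y)}(x)), i.e. O(Ψ_k(x)Ψ_t(y)) = O(Ψ_{−t}(σ_{Ψ_k(x)}(D^{t−1}(y))) Ψ_k(τ_{Ψ_t(y)}(x))). -/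
/-! Set-theoretic solutions of the Yang–Baxter equation.
For `r : X × X → X × X` we write `r (i, j) = (σ i j, τ j i)`, i.e. `σ_i(j) = σ i j` and
`τ_j(i) = τ j i`. -/

variable {X : Type*}

namespace NDIS

/-- One elementary move on words: apply `r` to two adjacent letters. -/
def Step (S : NDIS X) (x y : List X) : Prop :=
  ∃ (u v : List X) (i j : X), x = u ++ i :: j :: v ∧ y = u ++ S.σ i j :: S.τ j i :: v

/-- The orbit `O(x)` of a word `x` under the equivalence relation generated by the
adjacent `r`-moves (equivalently, the orbit of the induced `S_n`-action on `X^n`). -/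
def Orb (S : NDIS X) (x : List X) : Set (List X) := {y | Relation.EqvGen S.Step x y}

/-- `Ψ_k(a) = (D^{k−1}(a), …, D(a), a)`. -/
def Psi (S : NDIS X) (k : ℕ) (a : X) : List X :=
  (List.range k).map fun t => S.D^[k - 1 - t] a

/-- The inverse of the diagonal `D`. -/
noncomputable def Dinv (S : NDIS X) [Nonempty X] : X → X := Function.invFun S.D

/-- `Ψ_{−k}(a) = (a, D^{−1}(a), …, D^{−(k−1)}(a))`. -/
noncomputable def PsiNeg (S : NDIS X) [Nonempty X] (k : ℕ) (a : X) : List X :=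
  (List.range k).map fun t => S.Dinv^[t] a

/-- `σ_x = σ_{a_1} ∘ σ_{a_2} ∘ ⋯ ∘ σ_{a_k}` for a word `x = (a_1, …, a_k)`. -/
def sigmaWord (S : NDIS X) (x : List X) (z : X) : X := x.foldr (fun a w => S.σ a w) z

/-- `τ_x = τ_{a_k} ∘ ⋯ ∘ τ_{a_2} ∘ τ_{a_1}` for a word `x = (a_1, …, a_k)`. -/
def tauWord (S : NDIS X) (x : List X) (z : X) : X := x.foldl (fun w a => S.τ a w) z

/-- The concatenation `Ψ_{L 0}(a 0) Ψ_{L 1}(a 1) ⋯ Ψ_{L (k-1)}(a (k-1))`. -/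
def word (S : NDIS X) {k : ℕ} (L : Fin k → ℕ) (a : Fin k → X) : List X :=
  (List.ofFn fun t => S.Psi (L t) (a t)).flatten

/-- The concatenation `Ψ_{L (i+1)}(a (i+1)) ⋯ Ψ_{L (j-1)}(a (j-1))` of the blocks strictly
between positions `i` and `j` (the empty word when `j = i + 1`). -/
def midword (S : NDIS X) {k : ℕ} (L : Fin k → ℕ) (a : Fin k → X) (i j : Fin k) : List X :=
  (((List.ofFn fun t => S.Psi (L t) (a t)).drop ((i : ℕ) + 1)).take ((j : ℕ) - (i : ℕ) - 1)).flatten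

/-- The family `a` yields a `λ`-element: `a_j ≠ D^{−λ_j}(τ_w(a_i))` for all `i < j`, with
`w = Ψ_{λ_{i+1}}(a_{i+1}) ⋯ Ψ_{λ_{j−1}}(a_{j−1})`. -/
def IsLambdaFamily (S : NDIS X) [Nonempty X] {k : ℕ} (L : Fin k → ℕ) (a : Fin k → X) : Prop :=
  ∀ i j : Fin k, i < j →
    a j ≠ S.Dinv^[L j] (S.tauWord (S.midword L a i j) (a i))

/-- `x` is a `λ`-element for the partition with positive parts `L 0 ≥ L 1 ≥ ⋯ ≥ L (k-1) > 0`. -/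
def IsLambdaWord (S : NDIS X) [Nonempty X] {k : ℕ} (L : Fin k → ℕ) (x : List X) : Prop :=
  ∃ a : Fin k → X, x = S.word L a ∧ S.IsLambdaFamily L a

/-- The bijection `b` of `X^n` applying `r` to the entries in (0-based) positions `j` and
`j + 1` and fixing all other entries. -/
def bmap (S : NDIS X) {n : ℕ} (j : ℕ) (hj : j + 1 < n) (x : Fin n → X) : Fin n → X :=
  fun t =>
    if (t : ℕ) = j then S.σ (x ⟨j, by omega⟩) (x ⟨j + 1, hj⟩)
    else if (t : ℕ) = j + 1 then S.τ (x ⟨j + 1, hj⟩) (x ⟨j, by omega⟩)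
    else x t

/-- One elementary move on `X^n` (as functions `Fin n → X`). -/
def StepF (S : NDIS X) {n : ℕ} (x y : Fin n → X) : Prop :=
  ∃ (j : ℕ) (hj : j + 1 < n), y = S.bmap j hj x

end NDIS

/-- The offset `λ_1 + ⋯ + λ_i` of the `i`-th block (0-based). -/
def blockOffset {k : ℕ} (L : Fin k → ℕ) (i : Fin k) : ℕ :=
  ∑ t ∈ Finset.univ.filter (fun t => t < i), L t

/-- A `(λ_1, …, λ_k)`-shuffle: a permutation strictly increasing on each consecutive block. -/
def IsShuffle {k n : ℕ} (L : Fin k → ℕ) (θ : Equiv.Perm (Fin n)) : Prop :=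
  ∀ (i : Fin k) (p q : Fin n), blockOffset L i ≤ (p : ℕ) → p < q →
    (q : ℕ) < blockOffset L i + L i → θ p < θ q

namespace NDIS
variable {X : Type*} (S : NDIS X)

lemma invol' (i j : X) :
    S.σ (S.σ i j) (S.τ j i) = i ∧ S.τ (S.τ j i) (S.σ i j) = j := by
  have h := S.invol (i, j)
  simp only [rmapF, Prod.mk.injEq] at h
  exact h

lemma braid' (i j k : X) :
    S.σ (S.σ i j) (S.σ (S.τ j i) k) = S.σ i (S.σ j k) ∧
    S.τ (S.σ (S.τ j i) k) (S.σ i j) = S.σ (S.τ (S.σ j k) i) (S.τ k j) ∧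
    S.τ k (S.τ j i) = S.τ (S.τ k j) (S.τ (S.σ j k) i) := by
  have h := congrFun S.braid (i, j, k)
  simp only [Function.comp_apply, ridF, idrF, rmapF, Prod.mk.injEq] at h
  exact ⟨h.1, h.2.1, h.2.2⟩

lemma tau_D (i : X) : S.τ i (S.D i) = i := (S.τ i).apply_symm_apply i

lemma sigma_D_s10 (z : X) : S.σ (S.D z) z = S.D z := by
  have h := (S.invol' (S.D z) z).2
  rw [S.tau_D z] at h
  exact (S.τ z).injective (by rw [h, S.tau_D z])

lemma D_inj : Function.Injective S.D := by
  intro a b h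
  have ha : a = (S.σ (S.D a)).symm (S.D a) :=
    (((S.σ (S.D a)).symm_apply_eq).2 (S.sigma_D_s10 a).symm).symm
  have hb : b = (S.σ (S.D b)).symm (S.D b) :=
    (((S.σ (S.D b)).symm_apply_eq).2 (S.sigma_D_s10 b).symm).symm
  rw [ha, hb, h]

lemma Dinv_D [Nonempty X] (a : X) : S.Dinv (S.D a) = a :=
  Function.leftInverse_invFun S.D_inj a

lemma I1 (x b : X) : S.D (S.τ b x) = S.τ (S.σ x b) (S.D x) := by
  have h := (S.braid' (S.D x) x b).2.2
  rw [S.tau_D x] at h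
  show (S.τ (S.τ b x)).symm (S.τ b x) = _
  rw [Equiv.symm_apply_eq]
  exact h

lemma I2 (x z : X) : S.σ x (S.D z) = S.D (S.σ (S.τ (S.D z) x) z) := by
  have h := (S.braid' x (S.D z) z).2.1
  rw [S.sigma_D_s10 z, S.tau_D z] at h
  show _ = (S.τ (S.σ (S.τ (S.D z) x) z)).symm (S.σ (S.τ (S.D z) x) z)
  rw [Equiv.eq_symm_apply]
  exact h

lemma Psi_zero (a : X) : S.Psi 0 a = [] := by simp [Psi]

lemma Psi_one (a : X) : S.Psi 1 a = [a] := by simp [Psi]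

lemma Psi_succ_cons (k : ℕ) (a : X) : S.Psi (k + 1) a = S.D^[k] a :: S.Psi k a := by
  have hm : (List.range k).map ((fun t => S.D^[k + 1 - 1 - t] a) ∘ Nat.succ)
      = (List.range k).map (fun t => S.D^[k - 1 - t] a) := by
    refine List.map_congr_left fun t _ => ?_
    show S.D^[k + 1 - 1 - (t + 1)] a = S.D^[k - 1 - t] a
    congr 1
    omega
  show (List.range (k + 1)).map (fun t => S.D^[k + 1 - 1 - t] a) = _
  rw [List.range_succ_eq_map, List.map_cons, List.map_map, hm]
  rfl

lemma Psi_succ_snoc (k : ℕ) (a : X) : S.Psi (k + 1) a = S.Psi k (S.D a) ++ [a] := by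
  have hm : (List.range k).map (fun t => S.D^[k + 1 - 1 - t] a)
      = (List.range k).map (fun t => S.D^[k - 1 - t] (S.D a)) := by
    refine List.map_congr_left fun t ht => ?_
    rw [List.mem_range] at ht
    have h1 : k + 1 - 1 - t = (k - 1 - t) + 1 := by omega
    rw [h1, Function.iterate_succ_apply]
  have h2 : k + 1 - 1 - k = 0 := by omega
  show (List.range (k + 1)).map (fun t => S.D^[k + 1 - 1 - t] a) = _
  rw [List.range_succ, List.map_append, List.map_cons, List.map_nil, hm, h2]
  rfl

lemma PsiNeg_succ_cons [Nonempty X] (k : ℕ) (a : X) :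
    S.PsiNeg (k + 1) a = a :: S.PsiNeg k (S.Dinv a) := by
  have hm : (List.range k).map ((fun t => S.Dinv^[t] a) ∘ Nat.succ)
      = (List.range k).map (fun t => S.Dinv^[t] (S.Dinv a)) := by
    refine List.map_congr_left fun t _ => ?_
    exact Function.iterate_succ_apply S.Dinv t a
  show (List.range (k + 1)).map (fun t => S.Dinv^[t] a) = _
  rw [List.range_succ_eq_map, List.map_cons, List.map_map, hm]
  rfl

lemma PsiNeg_one [Nonempty X] (a : X) : S.PsiNeg 1 a = [a] := by simp [PsiNeg]

lemma sigmaWord_nil (z : X) : S.sigmaWord [] z = z := rfl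

lemma sigmaWord_cons (a : X) (w : List X) (z : X) :
    S.sigmaWord (a :: w) z = S.σ a (S.sigmaWord w z) := rfl

lemma sigmaWord_snoc (w : List X) (a z : X) :
    S.sigmaWord (w ++ [a]) z = S.sigmaWord w (S.σ a z) := by
  simp [sigmaWord, List.foldr_append]

lemma tauWord_cons (a : X) (w : List X) (z : X) :
    S.tauWord (a :: w) z = S.tauWord w (S.τ a z) := rfl

/-- The word obtained from `w` after pushing the letter `b` from the right end to the front. -/
def pushR (S : NDIS X) : List X → X → List X
  | [], _ => []
  | a :: w, b => S.τ (S.sigmaWord w b) a :: S.pushR w b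

lemma Step.cons' {x y : List X} (a : X) (h : S.Step x y) : S.Step (a :: x) (a :: y) := by
  obtain ⟨u, v, i, j, h1, h2⟩ := h
  exact ⟨a :: u, v, i, j, by simp [h1], by simp [h2]⟩

lemma Step.append_right' {x y : List X} (w : List X) (h : S.Step x y) :
    S.Step (x ++ w) (y ++ w) := by
  obtain ⟨u, v, i, j, h1, h2⟩ := h
  exact ⟨u, v ++ w, i, j, by simp [h1], by simp [h2]⟩

lemma eqv_cons {x y : List X} (a : X) (h : Relation.EqvGen S.Step x y) :
    Relation.EqvGen S.Step (a :: x) (a :: y) := by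
  induction h with
  | rel u v huv => exact Relation.EqvGen.rel _ _ (Step.cons' S a huv)
  | refl u => exact Relation.EqvGen.refl _
  | symm u v _ ih => exact Relation.EqvGen.symm _ _ ih
  | trans u v w _ _ ih1 ih2 => exact Relation.EqvGen.trans _ _ _ ih1 ih2

lemma eqv_append_right {x y : List X} (w : List X) (h : Relation.EqvGen S.Step x y) :
    Relation.EqvGen S.Step (x ++ w) (y ++ w) := by
  induction h with
  | rel u v huv => exact Relation.EqvGen.rel _ _ (Step.append_right' S w huv)
  | refl u => exact Relation.EqvGen.refl _
  | symm u v _ ih => exact Relation.EqvGen.symm _ _ ih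
  | trans u v w' _ _ ih1 ih2 => exact Relation.EqvGen.trans _ _ _ ih1 ih2

lemma pushA (w : List X) (b : X) :
    Relation.EqvGen S.Step (w ++ [b]) (S.sigmaWord w b :: S.pushR w b) := by
  induction w with
  | nil => exact Relation.EqvGen.refl _
  | cons a w ih =>
    refine Relation.EqvGen.trans _ _ _ (S.eqv_cons a ih) ?_
    refine Relation.EqvGen.rel _ _ ?_
    exact ⟨[], S.pushR w b, a, S.sigmaWord w b, rfl, rfl⟩

lemma I1k (k : ℕ) : ∀ x b : X,
    S.τ (S.sigmaWord (S.Psi k x) b) (S.D^[k] x) = S.D^[k] (S.τ b x) := by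
  induction k with
  | zero => intro x b; simp [Psi_zero, sigmaWord_nil]
  | succ k ih =>
    intro x b
    rw [S.Psi_succ_snoc k x, S.sigmaWord_snoc, Function.iterate_succ_apply,
      Function.iterate_succ_apply, ih (S.D x) (S.σ x b), S.I1 x b]

lemma pushR_Psi (k : ℕ) : ∀ x b : X, S.pushR (S.Psi k x) b = S.Psi k (S.τ b x) := by
  induction k with
  | zero => intro x b; simp [Psi_zero, pushR]
  | succ k ih =>
    intro x b
    rw [S.Psi_succ_cons k x, S.Psi_succ_cons k (S.τ b x)]
    show S.τ (S.sigmaWord (S.Psi k x) b) (S.D^[k] x) :: S.pushR (S.Psi k x) b = _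
    rw [S.I1k k x b, ih x b]

lemma I2k (k : ℕ) : ∀ x z : X,
    S.sigmaWord (S.Psi k x) (S.D z) = S.D (S.sigmaWord (S.Psi k (S.τ (S.D z) x)) z) := by
  induction k with
  | zero => intro x z; simp [Psi_zero, sigmaWord_nil]
  | succ k ih =>
    intro x z
    rw [S.Psi_succ_snoc k x, S.sigmaWord_snoc, S.I2 x z,
      ih (S.D x) (S.σ (S.τ (S.D z) x) z), S.Psi_succ_snoc k (S.τ (S.D z) x),
      S.sigmaWord_snoc]
    congr 2
    rw [← S.I2 x z, S.I1 x (S.D z)]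

lemma orb_eq_of_eqv {x y : List X} (h : Relation.EqvGen S.Step x y) : S.Orb x = S.Orb y := by
  ext z
  exact ⟨fun hz => Relation.EqvGen.trans _ _ _ (Relation.EqvGen.symm _ _ h) hz,
    fun hz => Relation.EqvGen.trans _ _ _ h hz⟩

lemma main_exchange [Nonempty X] (k : ℕ) (y : X) (n : ℕ) : ∀ (x : X),
    Relation.EqvGen S.Step (S.Psi k x ++ S.Psi (n + 1) y)
      (S.PsiNeg (n + 1) (S.sigmaWord (S.Psi k x) (S.D^[n] y)) ++
        S.Psi k (S.tauWord (S.Psi (n + 1) y) x)) := by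
  induction n with
  | zero =>
    intro x
    rw [S.Psi_one y, S.PsiNeg_one]
    have h := S.pushA (S.Psi k x) y
    rw [S.pushR_Psi k x y] at h
    simpa [tauWord_cons, tauWord] using h
  | succ n ih =>
    intro x
    set b := S.D^[n + 1] y with hb
    have hsplit : S.Psi k x ++ S.Psi (n + 2) y
        = (S.Psi k x ++ [b]) ++ S.Psi (n + 1) y := by
      rw [S.Psi_succ_cons (n + 1) y, ← hb, List.append_cons]
    have h1 := S.eqv_append_right (S.Psi (n + 1) y) (S.pushA (S.Psi k x) b)
    rw [S.pushR_Psi k x b] at h1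
    set x' := S.τ b x with hx'
    set c0 := S.sigmaWord (S.Psi k x) b with hc0
    have h2 := S.eqv_cons c0 (ih x')
    have hkey : S.Dinv c0 = S.sigmaWord (S.Psi k x') (S.D^[n] y) := by
      have : c0 = S.D (S.sigmaWord (S.Psi k x') (S.D^[n] y)) := by
        rw [hc0, hb, Function.iterate_succ_apply', S.I2k k x (S.D^[n] y), hx', hb,
          Function.iterate_succ_apply']
      rw [this, S.Dinv_D]
    have hrhs : S.PsiNeg (n + 2) (S.sigmaWord (S.Psi k x) (S.D^[n + 1] y)) ++
        S.Psi k (S.tauWord (S.Psi (n + 2) y) x)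
        = c0 :: (S.PsiNeg (n + 1) (S.sigmaWord (S.Psi k x') (S.D^[n] y)) ++
            S.Psi k (S.tauWord (S.Psi (n + 1) y) x')) := by
      rw [← hb, ← hc0, S.PsiNeg_succ_cons, hkey, S.Psi_succ_cons (n + 1) y, ← hb,
        S.tauWord_cons, ← hx']
      rfl
    rw [hsplit, hrhs]
    exact Relation.EqvGen.trans _ _ _ h1 h2

end NDIS

/-- Exchange Rule: For a non-degenerate involutive solution `(X, r)`, all
`x, y ∈ X` and all `t, k ≥ 1`:
`O(Ψ_k(x)Ψ_t(y)) = O(Ψ_{−t}(σ_{Ψ_k(x)}(D^{t−1}(y))) Ψ_k(τ_{Ψ_t(y)}(x)))`. -/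
theorem orbit_exchange_rule {X : Type*} [Nonempty X] (S : NDIS X)
    (t k : ℕ) (ht : 1 ≤ t) (hk : 1 ≤ k) (x y : X) :
    S.Orb (S.Psi k x ++ S.Psi t y) =
      S.Orb (S.PsiNeg t (S.sigmaWord (S.Psi k x) (S.D^[t - 1] y)) ++
        S.Psi k (S.tauWord (S.Psi t y) x)) := by
  obtain ⟨n, rfl⟩ : ∃ n, t = n + 1 := ⟨t - 1, by omega⟩
  simpa using S.orb_eq_of_eqv (S.main_exchange k y n x)
end
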